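/- Let G be an r-uniform hypergraph on t vertices. If λ(G) > λ(K_{t-1}^{(r)}), then G is dense. -/

import Mathlib

structure UHypergraph (r : ℕ) where
  verts : Finset ℕ
  edges : Finset (Finset ℕ)
  edge_sub : ∀ e ∈ edges, e ⊆ verts
  edge_card : ∀ e ∈ edges, e.card = r

namespace UHypergraph

variable {r : ℕ}

/-- The polynomial value `λ(E, x) = Σ_{e ∈ E} Π_{i ∈ e} x_i`. -/
def polyValue (E : Finset (Finset ℕ)) (x : ℕ → ℝ) : ℝ :=
  ∑ e ∈ E, ∏ i ∈ e, x i

/-- A legal weighting: nonnegative, supported on the vertex set, summing to 1. -/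
def LegalWeighting (G : UHypergraph r) (x : ℕ → ℝ) : Prop :=
  (∀ i, 0 ≤ x i) ∧ (∀ i ∉ G.verts, x i = 0) ∧ ∑ i ∈ G.verts, x i = 1

/-- The Lagrangian of a hypergraph. -/
noncomputable def lagrangian (G : UHypergraph r) : ℝ :=
  sSup {l : ℝ | ∃ x, G.LegalWeighting x ∧ l = polyValue G.edges x}

/-- An optimum weighting attains the Lagrangian. -/
def IsOptimal (G : UHypergraph r) (x : ℕ → ℝ) : Prop :=
  G.LegalWeighting x ∧ polyValue G.edges x = G.lagrangian

def IsSubgraph (H G : UHypergraph r) : Prop :=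
  H.verts ⊆ G.verts ∧ H.edges ⊆ G.edges

def IsProperSubgraph (H G : UHypergraph r) : Prop :=
  H.IsSubgraph G ∧ (H.verts ≠ G.verts ∨ H.edges ≠ G.edges)

/-- A hypergraph is dense if every proper subgraph has strictly smaller Lagrangian. -/
def Dense (G : UHypergraph r) : Prop :=
  ∀ H : UHypergraph r, H.IsProperSubgraph G → H.lagrangian < G.lagrangian

/-- The link `E_i` of a vertex `i`. -/
def link (G : UHypergraph r) (i : ℕ) : Finset (Finset ℕ) :=
  (G.edges.filter fun e => i ∈ e).image fun e => e.erase i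

/-- The pair link `E_{ij}`. -/
def pairLink (G : UHypergraph r) (i j : ℕ) : Finset (Finset ℕ) :=
  (G.edges.filter fun e => i ∈ e ∧ j ∈ e).image fun e => (e.erase i).erase j

/-- `E_{i \ j} = E_i ∩ E_j^c`. -/
def linkDiff (G : UHypergraph r) (i j : ℕ) : Finset (Finset ℕ) :=
  (G.link i).filter fun A => j ∉ A ∧ insert j A ∉ G.edges

/-- `G` contains a clique of order `t`. -/
def HasClique (G : UHypergraph r) (t : ℕ) : Prop :=
  ∃ S ⊆ G.verts, S.card = t ∧ S.powersetCard r ⊆ G.edges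

/-- `G` is left-compressed: replacing a vertex of an edge by a smaller vertex
not in the edge yields an edge. -/
def LeftCompressed (G : UHypergraph r) : Prop :=
  ∀ e ∈ G.edges, ∀ i j : ℕ, i ∈ G.verts → i < j → j ∈ e → i ∉ e →
    insert i (e.erase j) ∈ G.edges

/-- The subgraph induced on a vertex set `S`. -/
def induce (G : UHypergraph r) (S : Finset ℕ) : UHypergraph r :=
  ⟨G.verts ∩ S, G.edges.filter fun e => e ⊆ S,
   fun e he => Finset.subset_inter (G.edge_sub e (Finset.mem_filter.mp he).1)
     (Finset.mem_filter.mp he).2,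
   fun e he => G.edge_card e (Finset.mem_filter.mp he).1⟩

end UHypergraph

/-- The complete `r`-graph on vertex set `{1, …, t}`. -/
def completeHG (t r : ℕ) : UHypergraph r :=
  ⟨Finset.Icc 1 t, (Finset.Icc 1 t).powersetCard r,
   fun _ he => (Finset.mem_powersetCard.mp he).1,
   fun _ he => (Finset.mem_powersetCard.mp he).2⟩

/-- `H₁ = [t-1]^{(3)} \ {(t-3)(t-2)(t-1)}`. -/
def H1 (t : ℕ) : UHypergraph 3 :=
  ⟨Finset.Icc 1 (t-1), (completeHG (t-1) 3).edges.erase {t-3, t-2, t-1},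
   fun e he => (completeHG (t-1) 3).edge_sub e (Finset.mem_of_mem_erase he),
   fun e he => (completeHG (t-1) 3).edge_card e (Finset.mem_of_mem_erase he)⟩

/-!
A proper subgraph `H` of `G` either misses a vertex, and then embeds into `K_{t-1}^{(r)}`, so
`λ(H) ≤ λ(K_{t-1}^{(r)}) < λ(G)`; or it has all `t` vertices and misses an edge `e`. In the latter
case take an optimal weighting `x` of `H`. If `x` vanishes at some vertex, it is a weighting of a
hypergraph on `t - 1` vertices and again `λ(H) ≤ λ(K_{t-1}^{(r)})`. Otherwise every edge of `G` has
positive weight, and `λ(H) = λ(H, x) < λ(H, x) + Π_{i ∈ e} x_i ≤ λ(G, x) ≤ λ(G)`.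
-/

namespace UHypergraph

variable {r : ℕ} {x : ℕ → ℝ}

section Lagrangian

lemma polyValue_nonneg (E : Finset (Finset ℕ)) (hx : ∀ i, 0 ≤ x i) : 0 ≤ polyValue E x :=
  Finset.sum_nonneg fun _ _ => Finset.prod_nonneg fun i _ => hx i

lemma continuous_polyValue (E : Finset (Finset ℕ)) : Continuous (polyValue E) := by
  unfold polyValue
  fun_prop

lemma LegalWeighting.le_one {G : UHypergraph r} (hx : G.LegalWeighting x) (i : ℕ) : x i ≤ 1 := by
  obtain ⟨h0, hs, hsum⟩ := hx
  by_cases hi : i ∈ G.verts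
  · exact hsum ▸ Finset.single_le_sum (fun j _ => h0 j) hi
  · simp [hs i hi]

variable (G : UHypergraph r)

lemma isCompact_setOf_legalWeighting : IsCompact {x | G.LegalWeighting x} := by
  refine (isCompact_univ_pi fun _ => isCompact_Icc (a := (0 : ℝ)) (b := 1)).of_isClosed_subset
    ?_ fun x hx i _ => ⟨hx.1 i, hx.le_one i⟩
  simp only [LegalWeighting, Set.ofPred_and, Set.ofPred_forall]
  exact (isClosed_iInter fun i => isClosed_le continuous_const (continuous_apply i)).inter
    ((isClosed_iInter fun i => isClosed_iInter fun _ =>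
      isClosed_eq (continuous_apply i) continuous_const).inter
      (isClosed_eq (by fun_prop) continuous_const))

lemma lagrangian_eq_sSup_image :
    G.lagrangian = sSup (polyValue G.edges '' {x | G.LegalWeighting x}) := by
  simp only [lagrangian, Set.image, Set.mem_ofPred_eq, eq_comm]

lemma polyValue_le_lagrangian (hx : G.LegalWeighting x) : polyValue G.edges x ≤ G.lagrangian := by
  rw [lagrangian_eq_sSup_image]
  exact le_csSup (G.isCompact_setOf_legalWeighting.image (continuous_polyValue _)).bddAbove
    ⟨x, hx, rfl⟩

lemma lagrangian_nonneg : 0 ≤ G.lagrangian :=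
  Real.sSup_nonneg <| by
    rintro _ ⟨x, hx, rfl⟩
    exact polyValue_nonneg _ hx.1

lemma exists_isOptimal (hV : G.verts.Nonempty) : ∃ x, G.IsOptimal x := by
  obtain ⟨v, hv⟩ := hV
  have hδ : G.LegalWeighting (Pi.single v 1) := by
    refine ⟨fun i => ?_, fun i hi => Pi.single_eq_of_ne (ne_of_mem_of_not_mem hv hi).symm _, ?_⟩
    · by_cases hi : i = v <;> simp [hi]
    · simp [Finset.sum_pi_single', hv]
  obtain ⟨x, hx, hval⟩ := (G.isCompact_setOf_legalWeighting.image (continuous_polyValue _)).sSup_mem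
    ⟨_, _, hδ, rfl⟩
  exact ⟨x, hx, hval.trans G.lagrangian_eq_sSup_image.symm⟩

end Lagrangian

def mapWeighting (f : ℕ → ℕ) (V : Finset ℕ) (x : ℕ → ℝ) (m : ℕ) : ℝ :=
  ∑ i ∈ V with f i = m, x i

lemma mapWeighting_apply {f : ℕ → ℕ} {V : Finset ℕ} (hf : Set.InjOn f V) {i : ℕ} (hi : i ∈ V) :
    mapWeighting f V x (f i) = x i := by
  have hfiber : {j ∈ V | f j = f i} = {i} := by
    ext j
    simp only [Finset.mem_filter, Finset.mem_singleton]
    exact ⟨fun ⟨hj, hfj⟩ => hf hj hi hfj, by rintro rfl; exact ⟨hi, rfl⟩⟩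
  simp [mapWeighting, hfiber]

lemma LegalWeighting.map {G H : UHypergraph r} (hx : G.LegalWeighting x) {f : ℕ → ℕ}
    (hf : Set.MapsTo f G.verts H.verts) : H.LegalWeighting (mapWeighting f G.verts x) := by
  refine ⟨fun m => Finset.sum_nonneg fun i _ => hx.1 i, fun m hm => ?_, ?_⟩
  · refine Finset.sum_eq_zero fun i hi => absurd ?_ hm
    obtain ⟨hiV, rfl⟩ := Finset.mem_filter.mp hi
    exact hf hiV
  · simp only [mapWeighting]
    rw [Finset.sum_fiberwise_of_maps_to hf, hx.2.2]

lemma polyValue_le_lagrangian_of_injOn {G H : UHypergraph r} (hx : G.LegalWeighting x)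
    {f : ℕ → ℕ} (hf : Set.InjOn f G.verts) (hmaps : Set.MapsTo f G.verts H.verts)
    (hE : ∀ e ∈ G.edges, e.image f ∈ H.edges) : polyValue G.edges x ≤ H.lagrangian := by
  have hy := hx.map hmaps
  have himage : Set.InjOn (Finset.image f) G.edges :=
    (Finset.image_injOn_powerset_of_injOn hf).mono fun e he =>
      Finset.mem_powerset.mpr (G.edge_sub e he)
  calc polyValue G.edges x
      = polyValue (G.edges.image (Finset.image f)) (mapWeighting f G.verts x) := by
        rw [polyValue, polyValue, Finset.sum_image himage]
        refine Finset.sum_congr rfl fun e he => ?_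
        rw [Finset.prod_image (hf.mono (by exact_mod_cast G.edge_sub e he))]
        exact Finset.prod_congr rfl fun i hi => (mapWeighting_apply hf (G.edge_sub e he hi)).symm
    _ ≤ polyValue H.edges (mapWeighting f G.verts x) :=
        Finset.sum_le_sum_of_subset_of_nonneg (Finset.image_subset_iff.mpr hE) fun _ _ _ =>
          Finset.prod_nonneg fun i _ => hy.1 i
    _ ≤ H.lagrangian := H.polyValue_le_lagrangian hy

lemma polyValue_le_lagrangian_completeHG {G : UHypergraph r} (hx : G.LegalWeighting x) {s : ℕ}
    (hs : G.verts.card ≤ s) : polyValue G.edges x ≤ (completeHG s r).lagrangian := by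
  obtain ⟨f, hmaps, hf⟩ := G.verts.finite_toSet.exists_injOn_of_encard_le
    (t := ((Finset.Icc 1 s : Finset ℕ) : Set ℕ)) (by
      rw [Set.encard_coe_eq_coe_finsetCard, Set.encard_coe_eq_coe_finsetCard, Nat.card_Icc]
      exact_mod_cast hs)
  refine polyValue_le_lagrangian_of_injOn hx hf hmaps fun e he =>
    Finset.mem_powersetCard.mpr ⟨?_, ?_⟩
  · exact Finset.image_subset_iff.mpr fun i hi => hmaps (G.edge_sub e he hi)
  · rw [Finset.card_image_of_injOn (hf.mono (by exact_mod_cast G.edge_sub e he))]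
    exact G.edge_card e he

lemma lagrangian_le_lagrangian_completeHG (G : UHypergraph r) {s : ℕ} (hs : G.verts.card ≤ s) :
    G.lagrangian ≤ (completeHG s r).lagrangian :=
  Real.sSup_le (by rintro _ ⟨x, hx, rfl⟩; exact polyValue_le_lagrangian_completeHG hx hs)
    (lagrangian_nonneg _)

lemma polyValue_le_lagrangian_completeHG_of_eq_zero {G : UHypergraph r}
    (hx : G.LegalWeighting x) {v : ℕ} (hv : v ∈ G.verts) (hxv : x v = 0) {s : ℕ}
    (hs : G.verts.card ≤ s + 1) : polyValue G.edges x ≤ (completeHG s r).lagrangian := by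
  set G' := G.induce (G.verts.erase v)
  have hverts : G'.verts = G.verts.erase v := Finset.inter_eq_right.mpr (Finset.erase_subset _ _)
  have hx' : G'.LegalWeighting x := by
    refine ⟨hx.1, fun i hi => ?_, ?_⟩
    · by_cases hiv : i = v
      · exact hiv ▸ hxv
      · exact hx.2.1 i fun hiG => hi (hverts ▸ Finset.mem_erase.mpr ⟨hiv, hiG⟩)
    · rw [hverts, Finset.sum_erase _ hxv, hx.2.2]
  have hedges : polyValue G'.edges x = polyValue G.edges x := by
    refine Finset.sum_filter_of_ne fun e he hprod => ?_
    have hve : v ∉ e := fun hve => hprod (Finset.prod_eq_zero hve hxv)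
    exact fun i hi => Finset.mem_erase.mpr ⟨ne_of_mem_of_not_mem hi hve, G.edge_sub e he hi⟩
  rw [← hedges]
  exact polyValue_le_lagrangian_completeHG hx' (by rw [hverts, Finset.card_erase_of_mem hv]; omega)

lemma polyValue_lt_polyValue_of_ssubset {E F : Finset (Finset ℕ)} (hEF : E ⊂ F)
    (hx : ∀ i, 0 ≤ x i) (hpos : ∀ e ∈ F, ∀ i ∈ e, 0 < x i) : polyValue E x < polyValue F x := by
  obtain ⟨e, heF, heE⟩ := Finset.exists_of_ssubset hEF
  exact Finset.sum_lt_sum_of_subset hEF.subset heF heE (Finset.prod_pos (hpos e heF))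
    fun _ _ _ => Finset.prod_nonneg fun i _ => hx i

end UHypergraph

open UHypergraph

/-- If `G` has `t` vertices and `λ(G) > λ(K_{t-1}^{(r)})`, then `G` is dense. -/
theorem dense_of_lagrangian_gt {r t : ℕ} (G : UHypergraph r)
    (hv : G.verts.card = t)
    (h : (completeHG (t - 1) r).lagrangian < G.lagrangian) : G.Dense := by
  rintro H ⟨⟨hVsub, hEsub⟩, hne⟩
  have hHcard := Finset.card_le_card hVsub
  by_cases hcard : H.verts.card ≤ t - 1
  · exact (H.lagrangian_le_lagrangian_completeHG hcard).trans_lt h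
  have hV : H.verts = G.verts := Finset.eq_of_subset_of_card_le hVsub (by omega)
  have hE : H.edges ⊂ G.edges := hEsub.ssubset_of_ne (hne.resolve_left (not_not.mpr hV))
  obtain ⟨x, hx, hxH⟩ := H.exists_isOptimal (Finset.card_pos.mp (by omega))
  rw [← hxH]
  by_cases hzero : ∃ v ∈ H.verts, x v = 0
  · obtain ⟨v, hvH, hxv⟩ := hzero
    exact (polyValue_le_lagrangian_completeHG_of_eq_zero hx hvH hxv (by omega)).trans_lt h
  · push Not at hzero
    have hxG : G.LegalWeighting x := by
      rw [LegalWeighting, ← hV]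
      exact hx
    calc polyValue H.edges x < polyValue G.edges x :=
          polyValue_lt_polyValue_of_ssubset hE hx.1 fun e he i hi =>
            (hx.1 i).lt_of_ne' (hzero i (hV ▸ G.edge_sub e he hi))
      _ ≤ G.lagrangian := G.polyValue_le_lagrangian hxG
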